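/- arXiv:1305.2521 — 2 statements merged into one kernel-verified Lean document; each statement's English description precedes it below -/
import Mathlib

section
/- Let (X,μ) be a non-atomic probability space and T a tree on X. Then for every I ∈ T and every a with 0 < a < 1, there exists a subfamily F(I) ⊆ T consisting of pairwise disjoint subsets of I such that μ(⋃_{J ∈ F(I)} J) = Σ_{J ∈ F(I)} μ(J) = (1 − a) μ(I). -/
open MeasureTheory Set

/-- The generations of a tree determined by the child map `C`. -/
def treeGen {X : Type*} (C : Set X → Set (Set X)) : ℕ → Set (Set X)
  | 0 => {Set.univ}
  | (m+1) => ⋃ I ∈ treeGen C m, C I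

/-- `T` is a tree on the probability space `(X, μ)` with child map `C`. -/
structure IsTree {X : Type*} [MeasurableSpace X] (μ : Measure X)
    (T : Set (Set X)) (C : Set X → Set (Set X)) : Prop where
  univ_mem : Set.univ ∈ T
  measurableSet : ∀ I ∈ T, MeasurableSet I
  pos : ∀ I ∈ T, 0 < μ I
  child_sub_tree : ∀ I ∈ T, C I ⊆ T
  child_countable : ∀ I ∈ T, (C I).Countable
  child_nontriv : ∀ I ∈ T, ∃ J ∈ C I, ∃ K ∈ C I, J ≠ K
  child_subset : ∀ I ∈ T, ∀ J ∈ C I, J ⊆ I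
  child_disjoint : ∀ I ∈ T, ∀ J ∈ C I, ∀ K ∈ C I, J ≠ K → Disjoint J K
  child_cover : ∀ I ∈ T, I = ⋃₀ C I
  eq_gen : T = ⋃ m, treeGen C m
  gen_small : Filter.Tendsto (fun m => ⨆ I ∈ treeGen C m, μ I) Filter.atTop (nhds 0)

/-- The dyadic maximal operator associated to the tree `T`. -/
noncomputable def maxT {X : Type*} [MeasurableSpace X] (μ : Measure X)
    (T : Set (Set X)) (φ : X → ℝ) (x : X) : ℝ :=
  sSup {r : ℝ | ∃ I ∈ T, x ∈ I ∧ r = (∫ u in I, |φ u| ∂μ) / (μ I).toReal}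

/-- `φ : X → ℝ` has decreasing rearrangement `g : (0,1] → ℝ`. -/
def HasRearrangement {X : Type*} [MeasurableSpace X] (μ : Measure X)
    (φ : X → ℝ) (g : ℝ → ℝ) : Prop :=
  ∀ l : ℝ, 0 ≤ l → μ {x | l < φ x} = volume {t ∈ Set.Ioc (0:ℝ) 1 | l < g t}

/-- `H_p(z) = -(p-1) z^p + p z^{p-1}`. -/
noncomputable def Hfun (p z : ℝ) : ℝ := -(p-1) * z ^ p + p * z ^ (p-1)

/-- `ω_p`, the inverse function of `H_p : [1, p/(p-1)] → [0,1]`. -/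
noncomputable def omegaFun (p b : ℝ) : ℝ :=
  sSup {z : ℝ | z ∈ Set.Icc 1 (p/(p-1)) ∧ Hfun p z = b}

/-- The decreasing rearrangement `ψ*(t) = sup_{e ⊆ X, μ(e) = t} inf_{x ∈ e} ψ(x)`. -/
noncomputable def decRearr {X : Type*} [MeasurableSpace X] (μ : Measure X)
    (ψ : X → ℝ) (t : ℝ) : ℝ :=
  sSup {r : ℝ | ∃ e : Set X, μ e = ENNReal.ofReal t ∧ r = sInf (ψ '' e)}

/-!
To select cells of total measure `t = (1 - a) μ(I)`, descend the tree one generation at a time,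
keeping a selected family `F` and the cells `R` of the current generation that are still free,
which together partition `I`. At each step the free
cells are replaced by their children, and children are added to `F` one at a time for as long as
`μ (⋃₀ F)` stays at most `t`; the first child that would overshoot stays free. So at generation
`k` the deficit `t - μ (⋃₀ F)` is smaller than the measure of a cell of generation `k`, which
tends to zero.
-/

open Filter
open scoped ENNReal Topology

theorem exists_seq_of_forall_exists {α : Type*} {P : ℕ → α → Prop} {r : α → α → Prop} {a : α}
    (h0 : P 0 a) (h : ∀ n x, P n x → ∃ y, P (n + 1) y ∧ r x y) :
    ∃ f : ℕ → α, (∀ n, P n (f n)) ∧ ∀ n, r (f n) (f (n + 1)) := by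
  classical
  choose g hg using h
  let f : ℕ → α := fun n => Nat.rec a (fun n x => if hx : P n x then g n x hx else x) n
  have hf : ∀ n, P n (f n) := by
    intro n
    induction n with
    | zero => exact h0
    | succ n ih =>
      show P (n + 1) (if hx : P n (f n) then g n (f n) hx else f n)
      rw [dif_pos ih]
      exact (hg n _ ih).1
  refine ⟨f, hf, fun n => ?_⟩
  show r (f n) (if hx : P n (f n) then g n (f n) hx else f n)
  rw [dif_pos (hf n)]
  exact (hg n _ (hf n)).2

theorem Finset.exists_sum_le_lt_sum_add {α M : Type*} [AddCommMonoid M] [LinearOrder M]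
    [CanonicallyOrderedAdd M] (w : α → M) {b : M} {s : Finset α} (h : b < ∑ x ∈ s, w x) :
    ∃ u ⊆ s, ∃ a ∈ s, a ∉ u ∧ ∑ x ∈ u, w x ≤ b ∧ b < ∑ x ∈ u, w x + w a := by
  classical
  induction s using Finset.induction_on with
  | empty => exact absurd h not_lt_zero
  | insert a s ha ih =>
    by_cases hs : b < ∑ x ∈ s, w x
    · obtain ⟨u, hu, c, hc, hcu, hle, hlt⟩ := ih hs
      exact ⟨u, hu.trans (subset_insert a s), c, mem_insert_of_mem hc, hcu, hle, hlt⟩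
    · refine ⟨s, subset_insert a s, a, mem_insert_self a s, ha, not_lt.1 hs, ?_⟩
      rwa [sum_insert ha, add_comm] at h

theorem Set.Pairwise.disjoint_sUnion_diff {α : Type*} {A G : Set (Set α)}
    (h : A.Pairwise Disjoint) (hG : G ⊆ A) : Disjoint (⋃₀ G) (⋃₀ (A \ G)) :=
  disjoint_sUnion_left.2 fun _ hK => disjoint_sUnion_right.2 fun _ hL =>
    h (hG hK) hL.1 (ne_of_mem_of_not_mem hK hL.2)

section Tree

variable {X : Type*} {C : Set X → Set (Set X)}

def children (C : Set X → Set (Set X)) (R : Set (Set X)) : Set (Set X) :=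
  ⋃ J ∈ R, C J

theorem mem_children {R : Set (Set X)} {K : Set X} : K ∈ children C R ↔ ∃ J ∈ R, K ∈ C J :=
  mem_iUnion₂.trans (by simp only [exists_prop])

theorem children_mono {R S : Set (Set X)} (h : R ⊆ S) : children C R ⊆ children C S :=
  biUnion_mono h fun _ _ => subset_rfl

variable [MeasurableSpace X] {μ : Measure X} {T : Set (Set X)}

namespace IsTree

theorem treeGen_subset (hT : IsTree μ T C) (k : ℕ) : treeGen C k ⊆ T :=
  hT.eq_gen ▸ subset_iUnion (treeGen C) k

theorem children_subset (hT : IsTree μ T C) {R : Set (Set X)} (hR : R ⊆ T) :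
    children C R ⊆ T := fun _ hK => by
  obtain ⟨J, hJ, hKJ⟩ := mem_children.1 hK
  exact hT.child_sub_tree J (hR hJ) hKJ

theorem countable_children (hT : IsTree μ T C) {R : Set (Set X)} (hR : R ⊆ T)
    (hc : R.Countable) : (children C R).Countable :=
  hc.biUnion fun J hJ => hT.child_countable J (hR hJ)

theorem countable_treeGen (hT : IsTree μ T C) (k : ℕ) : (treeGen C k).Countable := by
  induction k with
  | zero => exact countable_singleton _
  | succ k ih => exact hT.countable_children (hT.treeGen_subset k) ih

theorem countable (hT : IsTree μ T C) : T.Countable :=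
  hT.eq_gen ▸ countable_iUnion hT.countable_treeGen

theorem sUnion_children (hT : IsTree μ T C) {R : Set (Set X)} (hR : R ⊆ T) :
    ⋃₀ children C R = ⋃₀ R := by
  ext x
  simp only [mem_sUnion, mem_children]
  constructor
  · rintro ⟨K, ⟨J, hJ, hKJ⟩, hxK⟩
    exact ⟨J, hJ, hT.child_subset J (hR hJ) K hKJ hxK⟩
  · rintro ⟨J, hJ, hxJ⟩
    rw [hT.child_cover J (hR hJ)] at hxJ
    obtain ⟨K, hKJ, hxK⟩ := hxJ
    exact ⟨K, ⟨J, hJ, hKJ⟩, hxK⟩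

theorem pairwise_disjoint_children (hT : IsTree μ T C) {R : Set (Set X)} (hR : R ⊆ T)
    (h : R.Pairwise Disjoint) : (children C R).Pairwise Disjoint := by
  intro K₁ hK₁ K₂ hK₂ hne
  obtain ⟨J₁, hJ₁, hKJ₁⟩ := mem_children.1 hK₁
  obtain ⟨J₂, hJ₂, hKJ₂⟩ := mem_children.1 hK₂
  by_cases hJ : J₁ = J₂
  · subst hJ
    exact hT.child_disjoint J₁ (hR hJ₁) K₁ hKJ₁ K₂ hKJ₂ hne
  · exact (h hJ₁ hJ₂ hJ).mono (hT.child_subset J₁ (hR hJ₁) K₁ hKJ₁)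
      (hT.child_subset J₂ (hR hJ₂) K₂ hKJ₂)

end IsTree

/-- `F` are the cells selected so far and `R` the free cells of generation `k`. -/
structure IsSplitting (T : Set (Set X)) (C : Set X → Set (Set X)) (I : Set X) (k : ℕ)
    (F R : Set (Set X)) : Prop where
  subset_tree : F ⊆ T
  subset_treeGen : R ⊆ treeGen C k
  pairwise_left : F.Pairwise Disjoint
  pairwise_right : R.Pairwise Disjoint
  disjoint : Disjoint (⋃₀ F) (⋃₀ R)
  union_eq : ⋃₀ F ∪ ⋃₀ R = I

theorem IsSplitting.refine (hT : IsTree μ T C) {I : Set X} {k : ℕ} {F R G : Set (Set X)}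
    (h : IsSplitting T C I k F R) (hG : G ⊆ children C R) :
    IsSplitting T C I (k + 1) (F ∪ G) (children C R \ G) := by
  have hRT : R ⊆ T := h.subset_treeGen.trans (hT.treeGen_subset k)
  have hA := hT.pairwise_disjoint_children hRT h.pairwise_right
  have hAR : ⋃₀ children C R = ⋃₀ R := hT.sUnion_children hRT
  have hGR : ⋃₀ G ⊆ ⋃₀ R := hAR ▸ sUnion_mono hG
  have hAGR : ⋃₀ (children C R \ G) ⊆ ⋃₀ R := hAR ▸ sUnion_mono sdiff_subset
  refine ⟨union_subset h.subset_tree (hG.trans (hT.children_subset hRT)),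
    sdiff_subset.trans (children_mono h.subset_treeGen), ?_, hA.mono sdiff_subset, ?_, ?_⟩
  · refine pairwise_union_of_symm.2 ⟨h.pairwise_left, hA.mono hG, fun L hL K hK _ => ?_⟩
    exact (h.disjoint.mono (subset_sUnion_of_mem hL) hGR).mono_right (subset_sUnion_of_mem hK)
  · rw [sUnion_union]
    exact disjoint_union_left.2 ⟨h.disjoint.mono_right hAGR, hA.disjoint_sUnion_diff hG⟩
  · rw [sUnion_union, union_assoc, ← sUnion_union, union_sdiff_cancel hG, hAR, h.union_eq]

structure IsSelectionStage (μ : Measure X) (T : Set (Set X)) (C : Set X → Set (Set X))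
    (I : Set X) (t : ℝ≥0∞) (k : ℕ) (F R : Set (Set X)) : Prop
    extends IsSplitting T C I k F R where
  measure_le : μ (⋃₀ F) ≤ t
  exists_lt : ∃ J ∈ R, t < μ (⋃₀ F) + μ J

theorem IsSelectionStage.start {I : Set X} {k : ℕ} {t : ℝ≥0∞} (hI : I ∈ treeGen C k)
    (ht : t < μ I) : IsSelectionStage μ T C I t k ∅ {I} where
  subset_tree := empty_subset T
  subset_treeGen := singleton_subset_iff.2 hI
  pairwise_left := pairwise_empty _
  pairwise_right := pairwise_singleton _ _
  disjoint := by simp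
  union_eq := by simp
  measure_le := by simp
  exists_lt := ⟨I, rfl, by simpa using ht⟩

theorem IsSelectionStage.exists_next (hT : IsTree μ T C) {I : Set X} {k : ℕ} {t : ℝ≥0∞}
    {F R : Set (Set X)} (h : IsSelectionStage μ T C I t k F R) :
    ∃ G ⊆ children C R, IsSelectionStage μ T C I t (k + 1) (F ∪ G) (children C R \ G) := by
  have hRT : R ⊆ T := h.subset_treeGen.trans (hT.treeGen_subset k)
  have hAT : children C R ⊆ T := hT.children_subset hRT
  have hA := hT.pairwise_disjoint_children hRT h.pairwise_right
  have hAc : (children C R).Countable :=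
    hT.countable_children hRT ((hT.countable_treeGen k).mono h.subset_treeGen)
  obtain ⟨J₀, hJ₀, hJ₀t⟩ := h.exists_lt
  have hdeficit : t - μ (⋃₀ F) < ∑' J : children C R, μ J := by
    rw [← measure_sUnion hAc hA fun K hK => hT.measurableSet K (hAT hK), hT.sUnion_children hRT]
    refine ENNReal.sub_lt_of_lt_add h.measure_le ?_
    calc t < μ (⋃₀ F) + μ J₀ := hJ₀t
      _ ≤ μ (⋃₀ F) + μ (⋃₀ R) := by gcongr; exact subset_sUnion_of_mem hJ₀
      _ = μ (⋃₀ R) + μ (⋃₀ F) := add_comm _ _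
  -- the total measure of the children exceeds the deficit already on a finite subfamily
  rw [ENNReal.tsum_eq_iSup_sum] at hdeficit
  obtain ⟨s, hs⟩ := lt_iSup_iff.1 hdeficit
  rw [show ∑ J ∈ s, μ J = ∑ J ∈ s.map (Function.Embedding.subtype _), μ J from
    by rw [Finset.sum_map]; rfl] at hs
  have hsA : ∀ J ∈ s.map (Function.Embedding.subtype _), J ∈ children C R := by
    simp only [Finset.mem_map, Function.Embedding.coe_subtype]
    rintro _ ⟨J, -, rfl⟩
    exact J.2
  obtain ⟨u, hus, J, hJs, hJu, hu_le, hu_lt⟩ := Finset.exists_sum_le_lt_sum_add (fun J => μ J) hs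
  have huA : (u : Set (Set X)) ⊆ children C R := fun K hK => hsA K (hus hK)
  have hu : μ (⋃₀ (u : Set (Set X))) = ∑ K ∈ u, μ K := by
    rw [measure_sUnion u.countable_toSet (hA.mono huA) fun K hK =>
      hT.measurableSet K (hAT (huA hK))]
    exact Finset.tsum_subtype u (fun K => μ K)
  have hF_union : μ (⋃₀ (F ∪ u)) = μ (⋃₀ F) + ∑ K ∈ u, μ K := by
    rw [sUnion_union, measure_union ?_ (.sUnion u.countable_toSet fun K hK =>
      hT.measurableSet K (hAT (huA hK))), hu]
    exact h.disjoint.mono_right (hT.sUnion_children hRT ▸ sUnion_mono huA)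
  refine ⟨u, huA, h.refine hT huA, ?_, J, ⟨hsA J hJs, hJu⟩, ?_⟩
  · calc μ (⋃₀ (F ∪ u)) = μ (⋃₀ F) + ∑ K ∈ u, μ K := hF_union
      _ ≤ μ (⋃₀ F) + (t - μ (⋃₀ F)) := by gcongr
      _ = t := add_tsub_cancel_of_le h.measure_le
  · rw [hF_union, add_assoc]
    exact ENNReal.lt_add_of_sub_lt_left (.inl hJ₀t.ne_top) hu_lt

theorem IsTree.exists_measure_sUnion_eq (hT : IsTree μ T C) {I : Set X} (hI : I ∈ T)
    {t : ℝ≥0∞} (ht : t < μ I) :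
    ∃ F ⊆ T, (∀ J ∈ F, J ⊆ I) ∧ F.Pairwise Disjoint ∧ μ (⋃₀ F) = t := by
  obtain ⟨k, hk⟩ : ∃ k, I ∈ treeGen C k := mem_iUnion.1 (hT.eq_gen ▸ hI)
  obtain ⟨p, hp, hp_succ⟩ := exists_seq_of_forall_exists (α := Set (Set X) × Set (Set X))
    (P := fun n p => IsSelectionStage μ T C I t (k + n) p.1 p.2) (r := fun p q => p.1 ⊆ q.1)
    (a := (∅, {I})) (IsSelectionStage.start hk ht) fun n p hp => by
      obtain ⟨G, -, hG⟩ := hp.exists_next hT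
      exact ⟨(p.1 ∪ G, _), hG, subset_union_left⟩
  have hmono : Monotone fun n => (p n).1 := monotone_nat_of_le_succ hp_succ
  set F := ⋃ n, (p n).1
  have hFI : ∀ n, ⋃₀ (p n).1 ⊆ I := fun n => (hp n).union_eq ▸ subset_union_left
  refine ⟨F, iUnion_subset fun n => (hp n).subset_tree, fun J hJ => ?_,
    (pairwise_iUnion hmono.directed_le).2 fun n => (hp n).pairwise_left, le_antisymm ?_ ?_⟩
  · obtain ⟨n, hn⟩ := mem_iUnion.1 hJ
    exact (subset_sUnion_of_mem hn).trans (hFI n)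
  · have hmono' : Monotone fun n => ⋃₀ (p n).1 := fun _ _ hmn => sUnion_mono (hmono hmn)
    rw [sUnion_iUnion, hmono'.measure_iUnion]
    exact iSup_le fun n => (hp n).measure_le
  · have hlim : Tendsto (fun n => μ (⋃₀ F) + ⨆ L ∈ treeGen C (k + n), μ L) atTop
        (𝓝 (μ (⋃₀ F))) := by
      simpa using tendsto_const_nhds.add
        (hT.gen_small.comp (tendsto_atTop_mono (Nat.le_add_left · k) tendsto_id))
    refine ge_of_tendsto' hlim fun n => ?_
    obtain ⟨J, hJ, hJt⟩ := (hp n).exists_lt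
    calc t ≤ μ (⋃₀ (p n).1) + μ J := hJt.le
      _ ≤ μ (⋃₀ F) + ⨆ L ∈ treeGen C (k + n), μ L := by
        gcongr
        · exact subset_iUnion (fun n => (p n).1) n
        · exact le_biSup (fun L => μ L) ((hp n).subset_treeGen hJ)

end Tree

theorem statement3_general {X : Type*} [MeasurableSpace X] (μ : Measure X)
    [IsProbabilityMeasure μ]
    (T : Set (Set X)) (C : Set X → Set (Set X)) (hT : IsTree μ T C)
    (I : Set X) (hI : I ∈ T) (a : ℝ) (ha0 : 0 < a) :
    ∃ F : Set (Set X), F ⊆ T ∧ F.Countable ∧ (∀ J ∈ F, J ⊆ I) ∧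
      F.Pairwise (fun J K => Disjoint J K) ∧
      μ (⋃₀ F) = ENNReal.ofReal (1 - a) * μ I ∧
      (∑' J : F, μ (J : Set X)) = ENNReal.ofReal (1 - a) * μ I := by
  have ht : ENNReal.ofReal (1 - a) * μ I < μ I := by
    simpa using (ENNReal.mul_lt_mul_iff_left (hT.pos I hI).ne' (measure_ne_top μ I)).2
      (ENNReal.ofReal_lt_one.2 (by linarith : 1 - a < 1))
  obtain ⟨F, hFT, hFI, hFd, hF⟩ := hT.exists_measure_sUnion_eq hI ht
  have hFc : F.Countable := hT.countable.mono hFT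
  refine ⟨F, hFT, hFc, hFI, hFd, hF, ?_⟩
  rw [← measure_sUnion hFc hFd fun J hJ => hT.measurableSet J (hFT hJ), hF]

/-- Lemma 2.1, splitting off measure `(1-a) μ(I)` inside a tree element. -/
theorem statement3 {X : Type*} [MeasurableSpace X] (μ : Measure X)
    [IsProbabilityMeasure μ] [NullSingletonClass μ]
    (T : Set (Set X)) (C : Set X → Set (Set X)) (hT : IsTree μ T C)
    (I : Set X) (hI : I ∈ T) (a : ℝ) (ha0 : 0 < a) (ha1 : a < 1) :
    ∃ F : Set (Set X), F ⊆ T ∧ F.Countable ∧ (∀ J ∈ F, J ⊆ I) ∧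
      F.Pairwise (fun J K => Disjoint J K) ∧
      μ (⋃₀ F) = ENNReal.ofReal (1 - a) * μ I ∧
      (∑' J : F, μ (J : Set X)) = ENNReal.ofReal (1 - a) * μ I :=
  statement3_general μ T C hT I hI a ha0
end

section
/- Let p > 1 and let f, F, L be real numbers with 0 < f, f^p ≤ F, f ≤ L and L < (p/(p−1)) f. Then there exists a non-increasing continuous function g : (0,1] → [0,∞) with ∫₀¹ g(u) du = f and ∫₀¹ g(u)^p du = F such that ∫₀¹ max( (1/t) ∫₀^t g(u) du, L )^p dt = F · [ω_p( (p L^{p−1} f − (p−1) L^p)/F )]^p. -/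
open MeasureTheory Set
open scoped ENNReal NNReal

/-!
The extremals are `g(u) = a L max(τ/u, 1)^(1-a)` with `(p-1)/p < a ≤ 1` and `0 ≤ τ ≤ 1`: the
average of `g` over `(0, t]` is `g(t)/a` while `t ≤ τ` and at most `L = g(t)/a` afterwards, so
`max(avg, L)^p = g^p / a^p` pointwise and the maximal integral is `F / a^p`; moreover
`F · H_p(1/a) = p L^(p-1) f - (p-1) L^p`, so `ω_p` of the argument is `1/a`.
With `c = f/L` and `τ (1-a) = c - a` the two moment constraints collapse to
`a^p / (p a - p + 1) = F / (L^p (p c - p + 1))`, which the intermediate value theorem solves on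
`((p-1)/p, c]`: the left side equals `c^p / (p c - p + 1)` at `a = c` and blows up as
`a ↓ (p-1)/p`.
-/

open Filter Topology

lemma Hfun_strictAntiOn {p : ℝ} (hp : 1 < p) : StrictAntiOn (Hfun p) (Ici 1) := by
  have hderiv : ∀ z : ℝ, 0 < z → HasDerivAt (Hfun p)
      (-(p - 1) * (p * z ^ (p - 1)) + p * ((p - 1) * z ^ (p - 1 - 1))) z := fun z hz =>
    ((Real.hasDerivAt_rpow_const (Or.inl hz.ne')).const_mul _).add
      ((Real.hasDerivAt_rpow_const (Or.inl hz.ne')).const_mul _)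
  refine strictAntiOn_of_deriv_neg (convex_Ici 1) (fun z hz =>
    (hderiv z (zero_lt_one.trans_le hz)).continuousAt.continuousWithinAt) fun z hz => ?_
  rw [interior_Ici] at hz
  have hlt : z ^ (p - 1 - 1) < z ^ (p - 1) := Real.rpow_lt_rpow_of_exponent_lt hz (by linarith)
  rw [(hderiv z (zero_lt_one.trans hz)).deriv]
  nlinarith [mul_pos (by linarith : 0 < p) (by linarith : 0 < p - 1)]

lemma omegaFun_Hfun {p z : ℝ} (hp : 1 < p) (hz : z ∈ Icc 1 (p / (p - 1))) :
    omegaFun p (Hfun p z) = z := by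
  have hset : {w | w ∈ Icc 1 (p / (p - 1)) ∧ Hfun p w = Hfun p z} = {z} := by
    ext w
    refine ⟨fun ⟨hw, he⟩ => (Hfun_strictAntiOn hp).injOn hw.1 hz.1 he, ?_⟩
    rintro rfl
    exact ⟨hz, rfl⟩
  rw [omegaFun, hset, csSup_singleton]

lemma Hfun_inv {p a : ℝ} (ha : 0 < a) : Hfun p a⁻¹ = (p * a - p + 1) / a ^ p := by
  have hap : 0 < a ^ p := Real.rpow_pos_of_pos ha p
  rw [Hfun, Real.inv_rpow ha.le, Real.inv_rpow ha.le, Real.rpow_sub_one ha.ne']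
  field_simp
  ring

lemma mul_Hfun_inv {p a L τ : ℝ} (ha : 0 < a) (hL : 0 < L) (hpa : 0 < p * a - p + 1) :
    (a * L) ^ p * (τ / (p * a - p + 1) + (1 - τ)) * Hfun p a⁻¹ =
      p * L ^ (p - 1) * (L * (τ + a * (1 - τ))) - (p - 1) * L ^ p := by
  have hap : 0 < a ^ p := Real.rpow_pos_of_pos ha p
  rw [Hfun_inv ha, Real.mul_rpow ha.le hL.le, Real.rpow_sub_one hL.ne']
  set q := p * a - p + 1 with hq
  have hq0 : q ≠ 0 := hpa.ne'
  field_simp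
  linear_combination (1 - τ) * L ^ p * hq

section Profile

variable {b τ t : ℝ}

lemma max_div_rpow_eq_of_le (hτ : 0 ≤ τ) {u : ℝ} (hu : u ∈ Ioc 0 τ) :
    max (τ / u) 1 ^ b = τ ^ b * u ^ (-b) := by
  rw [max_eq_left ((one_le_div hu.1).mpr hu.2), Real.div_rpow hτ hu.1.le,
    Real.rpow_neg hu.1.le, div_eq_mul_inv]

lemma max_div_rpow_eq_one {u : ℝ} (hu : 0 < u) (hτu : τ ≤ u) : max (τ / u) 1 ^ b = 1 := by
  rw [max_eq_right ((div_le_one hu).mpr hτu), Real.one_rpow]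

lemma integral_max_div_rpow_of_le (hb : b < 1) (hτ : 0 ≤ τ) (ht : 0 ≤ t) (htτ : t ≤ τ) :
    ∫ u in Ioc 0 t, max (τ / u) 1 ^ b = τ ^ b * t ^ (1 - b) / (1 - b) := by
  rw [setIntegral_congr_fun measurableSet_Ioc fun u hu =>
      max_div_rpow_eq_of_le (b := b) hτ ⟨hu.1, hu.2.trans htτ⟩,
    ← intervalIntegral.integral_of_le ht, intervalIntegral.integral_const_mul,
    integral_rpow (Or.inl (by linarith)), neg_add_eq_sub,
    Real.zero_rpow (by linarith : 1 - b ≠ 0)]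
  ring

lemma integrableOn_max_div_rpow (hb : b < 1) (hτ : 0 ≤ τ) :
    IntegrableOn (fun u => max (τ / u) 1 ^ b) (Ioc 0 τ) :=
  (((intervalIntegral.intervalIntegrable_rpow' (by linarith : -1 < -b)).const_mul (τ ^ b))
    |> (intervalIntegrable_iff_integrableOn_Ioc_of_le hτ).mp).congr_fun
    (fun u hu => (max_div_rpow_eq_of_le hτ hu).symm) measurableSet_Ioc

lemma integral_max_div_rpow_of_ge (hb : b < 1) (hτ : 0 ≤ τ) (hτt : τ ≤ t) :
    ∫ u in Ioc 0 t, max (τ / u) 1 ^ b = τ / (1 - b) + (t - τ) := by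
  have hconst : EqOn (fun u => max (τ / u) 1 ^ b) 1 (Ioc τ t) :=
    fun u hu => max_div_rpow_eq_one (hτ.trans_lt hu.1) hu.1.le
  rw [← Ioc_union_Ioc_eq_Ioc hτ hτt, setIntegral_union (Ioc_disjoint_Ioc_of_le le_rfl)
      measurableSet_Ioc (integrableOn_max_div_rpow hb hτ)
      ((integrableOn_const measure_Ioc_lt_top.ne).congr_fun hconst.symm measurableSet_Ioc),
    integral_max_div_rpow_of_le hb hτ hτ le_rfl, setIntegral_congr_fun measurableSet_Ioc hconst,
    ← Real.rpow_add' hτ (by norm_num), add_sub_cancel, Real.rpow_one]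
  simp [Real.volume_real_Ioc_of_le hτt]

end Profile

noncomputable def extremal (a L τ u : ℝ) : ℝ := a * L * max (τ / u) 1 ^ (1 - a)

section Extremal

variable {a L τ : ℝ}

lemma continuousOn_extremal : ContinuousOn (extremal a L τ) (Ioi 0) :=
  continuousOn_const.mul <| ((continuousOn_const.div continuousOn_id fun _ hu => ne_of_gt hu).sup
    continuousOn_const).rpow_const fun _ _ => Or.inl (by positivity)

lemma antitoneOn_extremal (ha0 : 0 ≤ a) (ha1 : a ≤ 1) (hL : 0 ≤ L) (hτ : 0 ≤ τ) :
    AntitoneOn (extremal a L τ) (Ioi 0) := fun s hs t _ hst =>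
  mul_le_mul_of_nonneg_left (Real.rpow_le_rpow (zero_le_one.trans (le_max_right _ _))
    (max_le_max (div_le_div_of_nonneg_left hτ hs hst) le_rfl) (by linarith)) (by positivity)

lemma extremal_nonneg (ha : 0 ≤ a) (hL : 0 ≤ L) (u : ℝ) : 0 ≤ extremal a L τ u :=
  mul_nonneg (mul_nonneg ha hL) (Real.rpow_nonneg (zero_le_one.trans (le_max_right _ _)) _)

lemma integral_extremal_of_le (ha : 0 < a) (hτ : 0 ≤ τ) {t : ℝ} (ht : 0 ≤ t) (htτ : t ≤ τ) :
    ∫ u in Ioc 0 t, extremal a L τ u = L * τ ^ (1 - a) * t ^ a := by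
  simp_rw [extremal]
  rw [integral_const_mul, integral_max_div_rpow_of_le (by linarith) hτ ht htτ,
    sub_sub_cancel]
  field_simp

lemma integral_extremal_of_ge (ha : 0 < a) (hτ : 0 ≤ τ) {t : ℝ} (hτt : τ ≤ t) :
    ∫ u in Ioc 0 t, extremal a L τ u = L * (τ + a * (t - τ)) := by
  simp_rw [extremal]
  rw [integral_const_mul, integral_max_div_rpow_of_ge (by linarith) hτ hτt,
    sub_sub_cancel]
  field_simp

lemma extremal_rpow (ha : 0 ≤ a) (hL : 0 ≤ L) (p u : ℝ) :
    extremal a L τ u ^ p = (a * L) ^ p * max (τ / u) 1 ^ ((1 - a) * p) := by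
  rw [extremal, Real.mul_rpow (mul_nonneg ha hL) (Real.rpow_nonneg (by positivity) _),
    ← Real.rpow_mul (by positivity)]

lemma integral_extremal_rpow (ha : 0 ≤ a) (hL : 0 ≤ L) (hτ0 : 0 ≤ τ) (hτ1 : τ ≤ 1) {p : ℝ}
    (hpa : 0 < p * a - p + 1) :
    ∫ u in Ioc 0 1, extremal a L τ u ^ p = (a * L) ^ p * (τ / (p * a - p + 1) + (1 - τ)) := by
  simp_rw [extremal_rpow ha hL p]
  rw [integral_const_mul, integral_max_div_rpow_of_ge (by linarith) hτ0 hτ1,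
    show 1 - (1 - a) * p = p * a - p + 1 by ring]

lemma max_average_extremal (ha0 : 0 < a) (ha1 : a ≤ 1) (hL : 0 ≤ L) (hτ : 0 ≤ τ) {t : ℝ}
    (ht : 0 < t) : max ((∫ u in Ioc 0 t, extremal a L τ u) / t) L = extremal a L τ t / a := by
  rcases le_total t τ with htτ | hτt
  · have hone : 1 ≤ τ / t := (one_le_div ht).mpr htτ
    have havg : L * τ ^ (1 - a) * t ^ a / t = L * (τ / t) ^ (1 - a) := by
      rw [Real.div_rpow hτ ht.le, Real.rpow_sub ht, Real.rpow_one]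
      field_simp
    rw [integral_extremal_of_le ha0 hτ ht.le htτ, havg, extremal, max_eq_left hone,
      max_eq_left (le_mul_of_one_le_right hL (Real.one_le_rpow hone (by linarith)))]
    field_simp
  · rw [integral_extremal_of_ge ha0 hτ hτt, extremal, max_div_rpow_eq_one ht hτt,
      max_eq_right (by
        rw [div_le_iff₀ ht]
        nlinarith [mul_nonneg (mul_nonneg hL (sub_nonneg.2 ha1)) (sub_nonneg.2 hτt)])]
    field_simp

end Extremal

lemma sub_one_div_lt_iff {p x : ℝ} (hp : 0 < p) : (p - 1) / p < x ↔ 0 < p * x - p + 1 := by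
  rw [div_lt_iff₀ hp]
  constructor <;> intro <;> linarith

lemma exists_rpow_div_eq {p c k : ℝ} (hp : 1 < p) (hc : (p - 1) / p < c)
    (hk : c ^ p / (p * c - p + 1) ≤ k) :
    ∃ a ∈ Ioc ((p - 1) / p) c, a ^ p / (p * a - p + 1) = k := by
  have hp0 : 0 < p := by linarith
  have hpos : ∀ a, (p - 1) / p < a → 0 < p * a - p + 1 := fun a => (sub_one_div_lt_iff hp0).mp
  have hden : Tendsto (fun a => p * a - p + 1) (𝓝[>] ((p - 1) / p)) (𝓝[>] 0) := by
    refine tendsto_nhdsWithin_iff.mpr ⟨?_, eventually_nhdsWithin_of_forall hpos⟩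
    have hcont : Continuous fun a : ℝ => p * a - p + 1 := by fun_prop
    have h := (hcont.tendsto ((p - 1) / p)).mono_left (nhdsWithin_le_nhds (s := Ioi ((p - 1) / p)))
    rwa [mul_div_cancel₀ _ hp0.ne', sub_sub_cancel_left, neg_add_cancel] at h
  have hblowup : Tendsto (fun a => a ^ p / (p * a - p + 1)) (𝓝[>] ((p - 1) / p)) atTop := by
    simp_rw [div_eq_mul_inv]
    exact Tendsto.pos_mul_atTop (Real.rpow_pos_of_pos (div_pos (by linarith) hp0) p)
      ((continuousAt_id.rpow_const (Or.inr hp0.le)).tendsto.mono_left nhdsWithin_le_nhds)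
      (tendsto_inv_nhdsGT_zero.comp hden)
  obtain ⟨a₁, hk₁, ha₁⟩ :=
    ((hblowup.eventually_ge_atTop k).and (Ioo_mem_nhdsGT hc)).exists
  have hcont : ContinuousOn (fun a => a ^ p / (p * a - p + 1)) (Icc a₁ c) :=
    (continuousOn_id.rpow_const fun _ _ => Or.inr hp0.le).div (by fun_prop)
      fun a ha => (hpos a (ha₁.1.trans_le ha.1)).ne'
  obtain ⟨a, ha, rfl⟩ := intermediate_value_Icc' ha₁.2.le hcont ⟨hk, hk₁⟩
  exact ⟨a, ⟨ha₁.1.trans_le ha.1, ha.2⟩, rfl⟩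

lemma exists_mul_one_sub_eq {a c : ℝ} (hac : a ≤ c) (hc : c ≤ 1) :
    ∃ τ ∈ Icc 0 1, τ * (1 - a) = c - a :=
  -- at `a = 1` also `c = 1`, and the junk value `τ = 0 / 0 = 0` still works
  ⟨(c - a) / (1 - a), ⟨div_nonneg (by linarith) (by linarith),
    div_le_one_of_le₀ (by linarith) (by linarith)⟩, div_mul_cancel_of_imp fun _ => by linarith⟩

lemma exists_extremal_params {p f F L : ℝ} (hp : 1 < p) (hf : 0 < f) (hfF : f ^ p ≤ F)
    (hfL : f ≤ L) (hL : L < p / (p - 1) * f) :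
    ∃ a τ, a ∈ Ioc ((p - 1) / p) 1 ∧ τ ∈ Icc 0 1 ∧ L * (τ + a * (1 - τ)) = f ∧
      (a * L) ^ p * (τ / (p * a - p + 1) + (1 - τ)) = F := by
  have hp0 : 0 < p := by linarith
  have hL0 : 0 < L := hf.trans_le hfL
  have hLp : 0 < L ^ p := Real.rpow_pos_of_pos hL0 p
  have hc : (p - 1) / p < f / L := by
    rw [div_mul_eq_mul_div, lt_div_iff₀ (by linarith)] at hL
    rw [div_lt_div_iff₀ hp0 hL0]
    linarith
  have hQ := (sub_one_div_lt_iff hp0).mp hc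
  have hk : (f / L) ^ p / (p * (f / L) - p + 1) ≤ F / (L ^ p * (p * (f / L) - p + 1)) := by
    rw [Real.div_rpow hf.le hL0.le, div_div]
    gcongr
  obtain ⟨a, ⟨ha, hac⟩, hak⟩ := exists_rpow_div_eq hp hc hk
  have hq := (sub_one_div_lt_iff hp0).mp ha
  have ha0 : 0 < a := (div_pos (by linarith) hp0).trans ha
  have hc1 : f / L ≤ 1 := (div_le_one hL0).mpr hfL
  obtain ⟨τ, hτI, hτ⟩ := exists_mul_one_sub_eq hac hc1
  have hLc : L * (f / L) = f := mul_div_cancel₀ f hL0.ne'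
  refine ⟨a, τ, ⟨ha, hac.trans hc1⟩, hτI, by linear_combination L * hτ + hLc, ?_⟩
  have hprofile : τ / (p * a - p + 1) + (1 - τ) =
      (p * (f / L) - p + 1) / (p * a - p + 1) := by
    rw [eq_div_iff hq.ne', add_mul, div_mul_cancel₀ _ hq.ne']
    linear_combination p * hτ
  rw [hprofile, Real.mul_rpow ha0.le hL0.le, mul_comm (a ^ p), mul_assoc, ← mul_div_assoc,
    mul_div_right_comm, hak, ← div_div, div_mul_cancel₀ _ hQ.ne', mul_div_cancel₀ _ hLp.ne']

/-- sharpness in the case `L < (p/(p-1)) f`. -/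
theorem statement11 (p f F L : ℝ) (hp : 1 < p) (hf : 0 < f) (hfF : f ^ p ≤ F)
    (hfL : f ≤ L) (hL : L < p / (p - 1) * f) :
    ∃ g : ℝ → ℝ, ContinuousOn g (Set.Ioc 0 1) ∧ AntitoneOn g (Set.Ioc 0 1) ∧
      (∀ t ∈ Set.Ioc (0:ℝ) 1, 0 ≤ g t) ∧
      (∫ u in Set.Ioc (0:ℝ) 1, g u) = f ∧ (∫ u in Set.Ioc (0:ℝ) 1, g u ^ p) = F ∧
      (∫ t in Set.Ioc (0:ℝ) 1, (max ((∫ u in Set.Ioc (0:ℝ) t, g u) / t) L) ^ p) =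
        F * (omegaFun p ((p * L ^ (p - 1) * f - (p - 1) * L ^ p) / F)) ^ p := by
  obtain ⟨a, τ, ⟨ha, ha1⟩, ⟨hτ0, hτ1⟩, hfa, hFa⟩ := exists_extremal_params hp hf hfF hfL hL
  have hp0 : 0 < p := by linarith
  have hL0 : 0 < L := hf.trans_le hfL
  have hF0 : 0 < F := (Real.rpow_pos_of_pos hf p).trans_le hfF
  have ha0 : 0 < a := (div_pos (by linarith) hp0).trans ha
  have hq := (sub_one_div_lt_iff hp0).mp ha
  have hF : ∫ u in Ioc 0 1, extremal a L τ u ^ p = F :=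
    (integral_extremal_rpow ha0.le hL0.le hτ0 hτ1 hq).trans hFa
  have hmax : ∫ t in Ioc 0 1, max ((∫ u in Ioc 0 t, extremal a L τ u) / t) L ^ p = F / a ^ p := by
    rw [setIntegral_congr_fun measurableSet_Ioc fun t ht => by
      rw [max_average_extremal ha0 ha1 hL0.le hτ0 ht.1,
        Real.div_rpow (extremal_nonneg ha0.le hL0.le t) ha0.le], integral_div, hF]
  have hω : omegaFun p ((p * L ^ (p - 1) * f - (p - 1) * L ^ p) / F) = a⁻¹ := by
    have harg : (p * L ^ (p - 1) * f - (p - 1) * L ^ p) / F = Hfun p a⁻¹ := by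
      rw [div_eq_iff hF0.ne', ← hfa, ← hFa, ← mul_Hfun_inv ha0 hL0 hq, mul_comm]
    refine harg ▸ omegaFun_Hfun hp ⟨one_le_inv_iff₀.mpr ⟨ha0, ha1⟩, ?_⟩
    rw [inv_le_comm₀ ha0 (div_pos hp0 (by linarith)), inv_div]
    exact ha.le
  refine ⟨extremal a L τ, continuousOn_extremal.mono Ioc_subset_Ioi_self,
    (antitoneOn_extremal ha0.le ha1 hL0.le hτ0).mono Ioc_subset_Ioi_self,
    fun t _ => extremal_nonneg ha0.le hL0.le t,
    (integral_extremal_of_ge ha0 hτ0 hτ1).trans (by rw [← hfa]), hF, ?_⟩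
  rw [hmax, hω, Real.inv_rpow ha0.le, div_eq_mul_inv]
end
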